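/- Let T ∈ 𝒫₁(ℓ_2). If T is a point of continuity of the identity map from (𝒫₁(ℓ_2), SOT) to (𝒫₁(ℓ_2), SOT*), or of the identity map from (𝒫₁(ℓ_2), WOT) to (𝒫₁(ℓ_2), SOT), or of the identity map from (𝒫₁(ℓ_2), WOT) to (𝒫₁(ℓ_2), SOT_*), then ‖T‖ = 1. -/

import Mathlib

open scoped ENNReal

noncomputable section

/-- The Hilbert space `ℓ₂` of square-summable complex sequences. -/
abbrev L2 := lp (fun _ : ℕ => ℂ) 2

/-- A vector of `ℓ₂` is positive if all its coordinates are nonnegative reals. -/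
def PosVec (x : L2) : Prop := ∀ n : ℕ, 0 ≤ (x n).re ∧ (x n).im = 0

/-- The set `𝒫₁(ℓ₂)` of positive contractions on `ℓ₂`. -/
def P1 : Set (L2 →L[ℂ] L2) :=
  {T | (∀ x : L2, PosVec x → PosVec (T x)) ∧ ‖T‖ ≤ 1}

/-- The strong operator topology (pointwise norm-convergence). -/
def sot : TopologicalSpace (L2 →L[ℂ] L2) :=
  TopologicalSpace.induced (fun T => (fun x : L2 => T x)) Pi.topologicalSpace

/-- The weak operator topology (pointwise weak convergence). -/
def wot : TopologicalSpace (L2 →L[ℂ] L2) :=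
  TopologicalSpace.induced
    (fun T => (fun q : L2 × L2 => (inner ℂ q.1 (T q.2) : ℂ)))
    Pi.topologicalSpace

/-- The dual strong operator topology `SOT_*` (pointwise norm-convergence of the adjoints). -/
def sotStar : TopologicalSpace (L2 →L[ℂ] L2) :=
  TopologicalSpace.induced
    (fun T => (fun x : L2 => (ContinuousLinearMap.adjoint T) x))
    Pi.topologicalSpace

/-- The `SOT*` topology, the join of `SOT` and `SOT_*`.  (In the order on
`TopologicalSpace`, `⊓` is the coarsest topology refining both.) -/
def sotSStar : TopologicalSpace (L2 →L[ℂ] L2) := sot ⊓ sotStar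

/-- Restriction of a topology to a subset. -/
def rtop {α : Type*} (s : Set α) (t : TopologicalSpace α) : TopologicalSpace ↥s :=
  t.induced Subtype.val

/-- Two topologies on the same set are similar if they have the same dense sets. -/
def SimilarTop {Y : Type*} (t t' : TopologicalSpace Y) : Prop :=
  ∀ A : Set Y, @Dense Y t A ↔ @Dense Y t' A

/-! If `‖T‖ < 1`, there is room `c = 1 - ‖T‖` to add `c • E m n`, where
`E m n = rankOne ℂ (e m) (e n)` (with `e = basisVec`) is the matrix unit `x ↦ x n • e m`,
and stay in `𝒫₁(ℓ₂)`.
As `k → ∞`, `T + c • E 0 k → T` strongly (since `x k → 0`), hence weakly, but its adjoint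
`T* + c • E k 0` sends `e 0` to `T* e 0 + c • e k`, which stays at distance `c` from `T* e 0`.
Dually, `T + c • E k 0 → T` weakly but not strongly. -/

open Filter Topology ContinuousLinearMap InnerProductSpace
open scoped ComplexOrder

theorem Memℓp.tendsto_norm_cofinite_zero {ι : Type*} {E : ι → Type*}
    [∀ i, NormedAddCommGroup (E i)] {p : ℝ≥0∞} {f : ∀ i, E i} (hf : Memℓp f p)
    (hp : 0 < p.toReal) : Tendsto (fun i => ‖f i‖) cofinite (𝓝 0) := by
  have h := ((hf.summable hp).tendsto_cofinite_zero).rpow_const (p := p.toReal⁻¹)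
    (Or.inr (inv_nonneg.2 hp.le))
  rw [Real.zero_rpow (inv_ne_zero hp.ne')] at h
  refine h.congr fun i => ?_
  rw [← Real.rpow_mul (norm_nonneg _), mul_inv_cancel₀ hp.ne', Real.rpow_one]

lemma L2.tendsto_apply_atTop_zero (x : L2) : Tendsto (fun n => x n) atTop (𝓝 0) := by
  rw [tendsto_zero_iff_norm_tendsto_zero, ← Nat.cofinite_eq_atTop]
  exact (lp.memℓp x).tendsto_norm_cofinite_zero (by norm_num)

def basisVec (n : ℕ) : L2 := lp.single 2 n 1

lemma basisVec_apply (n j : ℕ) : basisVec n j = if j = n then 1 else 0 := by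
  simp [basisVec, lp.single_apply, Pi.single_apply]

@[simp]
lemma norm_basisVec (n : ℕ) : ‖basisVec n‖ = 1 := by
  simp [basisVec]

@[simp]
lemma inner_basisVec_left (n : ℕ) (x : L2) : inner ℂ (basisVec n) x = x n := by
  simp [basisVec, lp.inner_single_left]

@[simp]
lemma inner_basisVec_right (n : ℕ) (x : L2) : inner ℂ x (basisVec n) = star (x n) := by
  simp [basisVec, lp.inner_single_right]

lemma rankOne_basisVec_apply (m n : ℕ) (x : L2) :
    rankOne ℂ (basisVec m) (basisVec n) x = x n • basisVec m := by
  rw [rankOne_apply, inner_basisVec_left]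

lemma posVec_iff (x : L2) : PosVec x ↔ ∀ n, 0 ≤ x n := by
  simp only [PosVec, Complex.nonneg_iff, eq_comm]

lemma add_smul_rankOne_basisVec_mem_P1 {A : L2 →L[ℂ] L2} (hA : A ∈ P1) {c : ℝ} (hc : 0 ≤ c)
    (hAc : ‖A‖ + c ≤ 1) (m n : ℕ) : A + c • rankOne ℂ (basisVec m) (basisVec n) ∈ P1 := by
  refine ⟨fun x hx => ?_, ?_⟩
  · have hAx := (posVec_iff _).1 (hA.1 x hx)
    rw [posVec_iff] at hx ⊢
    intro j
    have he : (0 : ℂ) ≤ basisVec m j := by rw [basisVec_apply]; split_ifs <;> simp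
    simp only [add_apply, smul_apply, rankOne_basisVec_apply, lp.coeFn_add, lp.coeFn_smul,
      Pi.add_apply, Pi.smul_apply, Complex.real_smul, smul_eq_mul]
    exact add_nonneg (hAx j) (mul_nonneg (Complex.zero_le_real.2 hc) (mul_nonneg (hx n) he))
  · calc ‖A + c • rankOne ℂ (basisVec m) (basisVec n)‖
        ≤ ‖A‖ + ‖c • rankOne ℂ (basisVec m) (basisVec n)‖ := norm_add_le _ _
      _ = ‖A‖ + c := by simp [norm_smul, Real.norm_of_nonneg hc]
      _ ≤ 1 := hAc

lemma not_tendsto_add_smul_basisVec {c : ℝ} (hc : c ≠ 0) (v : L2) :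
    ¬Tendsto (fun k => v + c • basisVec k) atTop (𝓝 v) := by
  intro h
  have hdist := (h.sub_const v).norm
  simp only [add_sub_cancel_left, sub_self, norm_zero, norm_smul, norm_basisVec, mul_one,
    tendsto_const_nhds_iff, norm_eq_zero] at hdist
  exact hc hdist

section Perturbation

variable (A : L2 →L[ℂ] L2) {c : ℝ}

lemma tendsto_add_smul_rankOne_apply (m : ℕ) (x : L2) :
    Tendsto (fun k => (A + c • rankOne ℂ (basisVec m) (basisVec k)) x) atTop (𝓝 (A x)) := by
  simpa using
    (((L2.tendsto_apply_atTop_zero x).smul_const (basisVec m)).const_smul c).const_add (A x)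

lemma tendsto_inner_add_smul_rankOne_apply (n : ℕ) (y x : L2) :
    Tendsto (fun k => inner ℂ y ((A + c • rankOne ℂ (basisVec k) (basisVec n)) x)) atTop
      (𝓝 (inner ℂ y (A x))) := by
  simpa [inner_smul_right_eq_smul, inner_smul_right] using
    (((L2.tendsto_apply_atTop_zero y).star.const_mul (x n)).const_smul c).const_add _

lemma not_tendsto_add_smul_rankOne_apply (hc : c ≠ 0) (n : ℕ) :
    ¬Tendsto (fun k => (A + c • rankOne ℂ (basisVec k) (basisVec n)) (basisVec n)) atTop
      (𝓝 (A (basisVec n))) := by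
  simpa [basisVec_apply] using not_tendsto_add_smul_basisVec hc _

lemma not_tendsto_adjoint_add_smul_rankOne_apply (hc : c ≠ 0) (m : ℕ) :
    ¬Tendsto (fun k => adjoint (A + c • rankOne ℂ (basisVec m) (basisVec k)) (basisVec m))
      atTop (𝓝 (adjoint A (basisVec m))) := by
  simpa [map_real_smul _ (LinearIsometryEquiv.continuous _), basisVec_apply] using
    not_tendsto_add_smul_basisVec hc _

end Perturbation

section Topologies

variable {α : Type*} {l : Filter α} {s : Set (L2 →L[ℂ] L2)} {u : α → s} {T : s}

lemma tendsto_rtop_sot_iff : Tendsto u l (@nhds _ (rtop s sot) T) ↔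
    ∀ x, Tendsto (fun k => (u k : L2 →L[ℂ] L2) x) l (𝓝 ((T : L2 →L[ℂ] L2) x)) := by
  rw [rtop, sot, induced_compose, nhds_induced, tendsto_comap_iff, tendsto_pi_nhds]
  rfl

lemma tendsto_rtop_sotStar_iff : Tendsto u l (@nhds _ (rtop s sotStar) T) ↔
    ∀ x, Tendsto (fun k => adjoint (u k : L2 →L[ℂ] L2) x) l
      (𝓝 (adjoint (T : L2 →L[ℂ] L2) x)) := by
  rw [rtop, sotStar, induced_compose, nhds_induced, tendsto_comap_iff, tendsto_pi_nhds]
  rfl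

lemma tendsto_rtop_wot_iff : Tendsto u l (@nhds _ (rtop s wot) T) ↔
    ∀ y x, Tendsto (fun k => inner ℂ y ((u k : L2 →L[ℂ] L2) x)) l
      (𝓝 (inner ℂ y ((T : L2 →L[ℂ] L2) x))) := by
  rw [rtop, wot, induced_compose, nhds_induced, tendsto_comap_iff, tendsto_pi_nhds,
    Prod.forall]
  rfl

lemma rtop_mono {t t' : TopologicalSpace (L2 →L[ℂ] L2)} (h : t ≤ t') : rtop s t ≤ rtop s t' :=
  induced_mono h

end Topologies

lemma sot_le_wot : sot ≤ wot := by
  let := sot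
  refine continuous_iff_le_induced.1 (continuous_pi fun q => continuous_const.inner ?_)
  exact (continuous_apply q.2).comp continuous_induced_dom

/-- Let `T ∈ 𝒫₁(ℓ₂)`.  If `T` is a point of continuity of the identity
map from `(𝒫₁(ℓ₂), SOT)` to `(𝒫₁(ℓ₂), SOT*)`, or from `(𝒫₁(ℓ₂), WOT)` to
`(𝒫₁(ℓ₂), SOT)`, or from `(𝒫₁(ℓ₂), WOT)` to `(𝒫₁(ℓ₂), SOT_*)`, then `‖T‖ = 1`. -/
theorem continuity_point_has_norm_one (T : ↥P1)
    (h : @ContinuousAt ↥P1 ↥P1 (rtop P1 sot) (rtop P1 sotSStar) id T ∨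
         @ContinuousAt ↥P1 ↥P1 (rtop P1 wot) (rtop P1 sot) id T ∨
         @ContinuousAt ↥P1 ↥P1 (rtop P1 wot) (rtop P1 sotStar) id T) :
    ‖(T : L2 →L[ℂ] L2)‖ = 1 := by
  by_contra hne
  set A := (T : L2 →L[ℂ] L2)
  set c := 1 - ‖A‖
  have hc : c ≠ 0 := sub_ne_zero.2 (Ne.symm hne)
  have hmem (m n : ℕ) : A + c • rankOne ℂ (basisVec m) (basisVec n) ∈ P1 :=
    add_smul_rankOne_basisVec_mem_P1 T.2 (sub_nonneg.2 T.2.2) (add_sub_cancel _ _).le m n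
  let u : ℕ → P1 := fun k => ⟨_, hmem 0 k⟩
  let w : ℕ → P1 := fun k => ⟨_, hmem k 0⟩
  have hu_sot : Tendsto u atTop (@nhds _ (rtop P1 sot) T) :=
    tendsto_rtop_sot_iff.2 (tendsto_add_smul_rankOne_apply A 0)
  have hu_sotStar : ¬Tendsto u atTop (@nhds _ (rtop P1 sotStar) T) := fun hu =>
    not_tendsto_adjoint_add_smul_rankOne_apply A hc 0 (tendsto_rtop_sotStar_iff.1 hu _)
  have hw_wot : Tendsto w atTop (@nhds _ (rtop P1 wot) T) :=
    tendsto_rtop_wot_iff.2 (tendsto_inner_add_smul_rankOne_apply A 0)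
  have hw_sot : ¬Tendsto w atTop (@nhds _ (rtop P1 sot) T) := fun hw =>
    not_tendsto_add_smul_rankOne_apply A hc 0 (tendsto_rtop_sot_iff.1 hw _)
  rcases h with h | h | h
  · exact hu_sotStar ((Tendsto.comp h hu_sot).mono_right (nhds_mono (rtop_mono inf_le_right)))
  · exact hw_sot (Tendsto.comp h hw_wot)
  · exact hu_sotStar (Tendsto.comp h (hu_sot.mono_right (nhds_mono (rtop_mono sot_le_wot))))
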